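/- Let G be a graph and let F be obtained from G by adding, for each vertex v of G, a new pendant vertex v' adjacent only to v. Then G has a cut of size at least k if and only if F has a cut of size at least n + k, where n is the number of vertices of G. -/

import Mathlib

/-- The size of the cut `(A, Aᶜ)`: the number of edges with one endpoint in `A`
and the other outside `A`, counted via ordered pairs `(p.1, p.2)` with
`p.1 ∈ A`, `p.2 ∉ A` (each crossing edge is counted exactly once this way). -/
noncomputable def cutSize {V : Type*} (G : SimpleGraph V) (A : Set V) : ℕ :=
  Nat.card {p : V × V // G.Adj p.1 p.2 ∧ p.1 ∈ A ∧ p.2 ∉ A}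

/-- The graph obtained from `G` by adding a pendant vertex `inr v` adjacent only to
`inl v`, for every vertex `v` of `G`. -/
def pendantGraph {V : Type*} (G : SimpleGraph V) : SimpleGraph (V ⊕ V) where
  Adj a b := match a, b with
    | Sum.inl u, Sum.inl v => G.Adj u v
    | Sum.inl u, Sum.inr v => u = v
    | Sum.inr u, Sum.inl v => u = v
    | Sum.inr _, Sum.inr _ => False
  symm := by
    constructor
    rintro (u | u) (v | v) h <;> simp_all <;> exact h.symm
  loopless := by
    constructor
    rintro (u | u) h <;> simp_all

/-! A cut `B` of the pendant graph restricts to the cut `inl ⁻¹' B` of `G`, which loses none of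
the crossing edges of `G`, while the `n` pendant edges contribute at most `n`. Conversely, putting
each pendant vertex `v'` on the opposite side from `v` extends a cut of `G` by all `n` pendant
edges. -/

open Sum

section

variable {V : Type*}

section Adj

variable (G : SimpleGraph V) {u v : V}

@[simp] lemma pendantGraph_adj_inl_inl : (pendantGraph G).Adj (inl u) (inl v) ↔ G.Adj u v :=
  Iff.rfl

@[simp] lemma pendantGraph_adj_inl_inr : (pendantGraph G).Adj (inl u) (inr v) ↔ u = v := Iff.rfl

@[simp] lemma pendantGraph_adj_inr_inl : (pendantGraph G).Adj (inr u) (inl v) ↔ u = v := Iff.rfl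

@[simp] lemma not_pendantGraph_adj_inr_inr : ¬ (pendantGraph G).Adj (inr u) (inr v) := id

end Adj

abbrev CrossingPairs (G : SimpleGraph V) (A : Set V) : Type _ :=
  {p : V × V // G.Adj p.1 p.2 ∧ p.1 ∈ A ∧ p.2 ∉ A}

def pendantSet (A : Set V) : Set (V ⊕ V) := Sum.elim A Aᶜ

def pendantCrossingPairsToSum (G : SimpleGraph V) (B : Set (V ⊕ V)) :
    CrossingPairs (pendantGraph G) B → CrossingPairs G (inl ⁻¹' B) ⊕ V
  | ⟨(inl u, inl v), h⟩ => inl ⟨(u, v), h⟩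
  | ⟨(inl u, inr _), _⟩ => inr u
  | ⟨(inr u, _), _⟩ => inr u

-- A pendant edge `vv'` crosses in at most one direction, according to the side of `inl v`.
lemma pendantCrossingPairsToSum_injective (G : SimpleGraph V) (B : Set (V ⊕ V)) :
    (pendantCrossingPairsToSum G B).Injective := by
  rintro ⟨⟨a | a, b | b⟩, hab⟩ ⟨⟨c | c, d | d⟩, hcd⟩ h <;>
    simp only [pendantCrossingPairsToSum, pendantGraph_adj_inl_inl, pendantGraph_adj_inl_inr,
      pendantGraph_adj_inr_inl, not_pendantGraph_adj_inr_inr, false_and, reduceCtorEq,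
      inl.injEq, inr.injEq, Subtype.mk.injEq, Prod.mk.injEq] at hab hcd h ⊢
  all_goals grind

open Classical in
noncomputable def sumToPendantCrossingPairs (G : SimpleGraph V) (A : Set V) :
    CrossingPairs G A ⊕ V → CrossingPairs (pendantGraph G) (pendantSet A)
  | inl ⟨(u, v), h⟩ => ⟨(inl u, inl v), h⟩
  | inr v => if hv : v ∈ A then ⟨(inl v, inr v), rfl, hv, not_not_intro hv⟩
      else ⟨(inr v, inl v), rfl, hv, hv⟩

-- `inl ⁻¹' pendantSet A` is `A` by definition, so the two maps compose to the identity.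
lemma sumToPendantCrossingPairs_injective (G : SimpleGraph V) (A : Set V) :
    (sumToPendantCrossingPairs G A).Injective := by
  refine Function.LeftInverse.injective (g := pendantCrossingPairsToSum G (pendantSet A)) ?_
  rintro (⟨⟨u, v⟩, h⟩ | v)
  · rfl
  · by_cases hv : v ∈ A <;> simp [sumToPendantCrossingPairs, pendantCrossingPairsToSum, hv]

lemma cutSize_pendantGraph_le [Finite V] (G : SimpleGraph V) (B : Set (V ⊕ V)) :
    cutSize (pendantGraph G) B ≤ cutSize G (inl ⁻¹' B) + Nat.card V := by
  have h := Nat.card_le_card_of_injective _ (pendantCrossingPairsToSum_injective G B)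
  rwa [Nat.card_sum] at h

lemma cutSize_pendantGraph_pendantSet [Finite V] (G : SimpleGraph V) (A : Set V) :
    cutSize (pendantGraph G) (pendantSet A) = cutSize G A + Nat.card V := by
  refine le_antisymm (cutSize_pendantGraph_le G _) ?_
  have h := Nat.card_le_card_of_injective _ (sumToPendantCrossingPairs_injective G A)
  rwa [Nat.card_sum] at h

end

theorem cut_iff_pendant_cut {V : Type*} [Fintype V] (G : SimpleGraph V) (k : ℕ) :
    (∃ A : Set V, k ≤ cutSize G A) ↔
      (∃ B : Set (V ⊕ V), Fintype.card V + k ≤ cutSize (pendantGraph G) B) := by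
  rw [← Nat.card_eq_fintype_card]
  constructor
  · rintro ⟨A, hA⟩
    refine ⟨pendantSet A, ?_⟩
    rw [cutSize_pendantGraph_pendantSet]
    omega
  · rintro ⟨B, hB⟩
    refine ⟨inl ⁻¹' B, ?_⟩
    have := cutSize_pendantGraph_le G B
    omega
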